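/- Let A be an n×n zero-one matrix with zero diagonal satisfying AJ = JA = kJ and A² = tI + λA + μ(J − I − A), respecting a homogeneous partition π with a cells of size b (ab = n), and suppose U_i·A = (λ+b−k)U_i + μ(J − U_i) for all i ∈ {1,…,a}. Then for every positive integer j, the block-circulant matrix M_j(A) of order (ja+1)n with first block-row (A, U₁,…,U₁ (j times), U₂,…,U₂ (j times), …, U_a,…,U_a (j times)) is the adjacency matrix of a DSRG with parameters ((ja+1)n, jn+k, jb+t, jb+λ, jb+μ). -/

import Mathlib

/-!
Indexing block rows and columns by the cyclic group `Fin (j * a + 1)`, the π-join is block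
circulant, and block-circulant matrices multiply by convolving their block sequences. Write
`M_j(A) = D + P`, with `A` on the block diagonal `D` and the cell matrices in `P`. The cell
identities `A Uᵢ = k Uᵢ`, `Uᵢ Uᵢ' = b Uᵢ'`, the quotient condition for `Uᵢ A`, and the
fact that every `Uᵢ` occurs `j` times in a block row (so the blocks of `P` add up to `j J`)
turn `D²`, `DP`, `PD` and `P²` into combinations of `I`, `D`, `P`, `J` and the
block-diagonal copy of `J`; the latter cancels, leaving
`M² = (t - μ) I + (λ - μ) M + (j b + μ) J`.
-/

open Matrix

/-- The all-ones matrix. -/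
def onesMat (n : ℕ) : Matrix (Fin n) (Fin n) ℝ := Matrix.of fun _ _ => 1

/-- The all-ones matrix indexed by blocks. -/
def Jbig (N n : ℕ) : Matrix (Fin N × Fin n) (Fin N × Fin n) ℝ := Matrix.of fun _ _ => 1

/-- `Ublk a b i`: columns in the `i`-th cell are all-ones, other entries zero. -/
def Ublk (a b : ℕ) (i : ℕ) : Matrix (Fin (a * b)) (Fin (a * b)) ℝ :=
  Matrix.of fun _ c => if (c : ℕ) / b = i then 1 else 0

/-- The π-join of `A` in power `j`: the block-circulant matrix of block order
`j*a+1` whose first block-row is `(A, U₁,…,U₁, U₂,…,U₂, …, U_a,…,U_a)`,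
each `Uᵢ` repeated `j` times. -/
def Mjoin (a b j : ℕ) (A : Matrix (Fin (a * b)) (Fin (a * b)) ℝ) :
    Matrix (Fin (j * a + 1) × Fin (a * b)) (Fin (j * a + 1) × Fin (a * b)) ℝ :=
  fun p q =>
    if q.1 - p.1 = 0 then A p.2 q.2
    else Ublk a b ((((q.1 - p.1 : Fin (j * a + 1)) : ℕ) - 1) / j) p.2 q.2

namespace Matrix

variable {G n α : Type*}

/-- Block `(p, q)` is `B (q - p)`, whereas `Matrix.circulant v` has entry `v (i - j)`. -/
def blockCirculant [Sub G] (B : G → Matrix n n α) : Matrix (G × n) (G × n) α :=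
  of fun p q => B (q.1 - p.1) p.2 q.2

section

variable [Sub G]

lemma blockCirculant_add [Add α] (B C : G → Matrix n n α) :
    blockCirculant (B + C) = blockCirculant B + blockCirculant C := rfl

lemma blockCirculant_sub [Sub α] (B C : G → Matrix n n α) :
    blockCirculant (B - C) = blockCirculant B - blockCirculant C := rfl

lemma blockCirculant_smul {R : Type*} [SMul R α] (r : R) (B : G → Matrix n n α) :
    blockCirculant (r • B) = r • blockCirculant B := rfl

end

variable [AddGroup G]

lemma blockCirculant_single_one [DecidableEq G] [DecidableEq n] [Zero α] [One α] :
    blockCirculant (Pi.single (0 : G) (1 : Matrix n n α)) = 1 := by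
  ext p q
  by_cases h : q.1 = p.1
  · by_cases h2 : p.2 = q.2 <;> simp [blockCirculant, h, h2, Prod.ext_iff, one_apply]
  · simp [blockCirculant, sub_eq_zero, h, Prod.ext_iff, Ne.symm h]

variable [Fintype G] [Fintype n] [NonUnitalNonAssocSemiring α]

lemma blockCirculant_mul (B C : G → Matrix n n α) :
    blockCirculant B * blockCirculant C = blockCirculant fun d => ∑ e, B e * C (d - e) := by
  ext p q
  simp only [blockCirculant, of_apply, mul_apply, Fintype.sum_prod_type, sum_apply]
  exact Fintype.sum_equiv (Equiv.subRight p.1) _ _ fun r => by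
    simp only [Equiv.subRight_apply, sub_sub_sub_cancel_right]

lemma blockCirculant_single_mul [DecidableEq G] (X : Matrix n n α) (C : G → Matrix n n α) :
    blockCirculant (Pi.single 0 X) * blockCirculant C = blockCirculant fun e => X * C e := by
  rw [blockCirculant_mul]
  congr 1
  funext d
  rw [Finset.sum_eq_single 0 (fun e _ he => by simp [he]) (by simp), Pi.single_eq_same, sub_zero]

lemma blockCirculant_single_mul_single [DecidableEq G] (X Y : Matrix n n α) :
    blockCirculant (Pi.single (0 : G) X) * blockCirculant (Pi.single 0 Y)
      = blockCirculant (Pi.single 0 (X * Y)) := by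
  rw [blockCirculant_single_mul]
  congr 1
  funext e
  by_cases he : e = 0 <;> simp [he]

lemma blockCirculant_mul_single [DecidableEq G] (C : G → Matrix n n α) (X : Matrix n n α) :
    blockCirculant C * blockCirculant (Pi.single 0 X) = blockCirculant fun e => C e * X := by
  rw [blockCirculant_mul]
  congr 1
  funext d
  rw [Finset.sum_eq_single d (fun e _ he => by simp [sub_eq_zero, Ne.symm he]) (by simp),
    sub_self, Pi.single_eq_same]

lemma blockCirculant_mul_const (B : G → Matrix n n α) (X : Matrix n n α) :
    blockCirculant B * blockCirculant (fun _ => X) = blockCirculant fun _ => (∑ e, B e) * X := by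
  rw [blockCirculant_mul, Finset.sum_mul]

lemma blockCirculant_const_mul (X : Matrix n n α) (B : G → Matrix n n α) :
    blockCirculant (fun _ => X) * blockCirculant B = blockCirculant fun _ => X * ∑ e, B e := by
  rw [blockCirculant_mul]
  congr 1
  funext d
  rw [Finset.mul_sum]
  exact (Equiv.subLeft d).sum_comp fun e => X * B e

end Matrix

theorem Finset.sum_range_mul_div {M : Type*} [AddCommMonoid M] (f : ℕ → M) (j a : ℕ) :
    ∑ x ∈ range (j * a), f (x / j) = j • ∑ i ∈ range a, f i := by
  induction a with
  | zero => simp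
  | succ a ih =>
    rw [mul_add_one, sum_range_add, ih, sum_range_succ, smul_add]
    congr 1
    rw [sum_congr rfl fun x hx => by
      have hx : x < j := mem_range.mp hx
      rw [Nat.mul_add_div (Nat.zero_lt_of_lt hx), Nat.div_eq_of_lt hx, add_zero],
      sum_const, card_range]

lemma onesMat_mul_onesMat (n : ℕ) : onesMat n * onesMat n = (n : ℝ) • onesMat n := by
  ext r c
  simp [onesMat, mul_apply]

lemma blockCirculant_onesMat (N n : ℕ) :
    blockCirculant (fun _ : Fin N => onesMat n) = Jbig N n := rfl

section Cells

variable {a b : ℕ}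

lemma sum_Ublk : ∑ i ∈ Finset.range a, Ublk a b i = onesMat (a * b) := by
  ext r c
  have hc : (c : ℕ) / b < a := Nat.div_lt_of_lt_mul (c.isLt.trans_eq (mul_comm a b))
  simp [Matrix.sum_apply, Ublk, onesMat, hc]

lemma sum_ite_div_eq {i : ℕ} (hi : i < a) :
    ∑ s : Fin (a * b), (if (s : ℕ) / b = i then (1 : ℝ) else 0) = b := by
  rw [Fin.sum_univ_eq_sum_range (fun x => if x / b = i then (1 : ℝ) else 0), mul_comm]
  refine (Finset.sum_range_mul_div (fun x => if x = i then (1 : ℝ) else 0) b a).trans ?_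
  simp [hi]

lemma Ublk_mul_Ublk {i : ℕ} (hi : i < a) (i' : ℕ) :
    Ublk a b i * Ublk a b i' = (b : ℝ) • Ublk a b i' := by
  ext r c
  simp only [Ublk, mul_apply, of_apply, Matrix.smul_apply, smul_eq_mul, ← Finset.sum_mul,
    sum_ite_div_eq hi]

lemma mul_Ublk {A : Matrix (Fin (a * b)) (Fin (a * b)) ℝ} {k : ℝ}
    (hA : A * onesMat (a * b) = k • onesMat (a * b)) (i : ℕ) :
    A * Ublk a b i = k • Ublk a b i := by
  ext r c
  have hrow := congr_fun₂ hA r c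
  simp only [onesMat, mul_apply, of_apply, mul_one, Matrix.smul_apply, smul_eq_mul] at hrow
  simp only [Ublk, mul_apply, of_apply, Matrix.smul_apply, smul_eq_mul, ← Finset.sum_mul, hrow]

end Cells

def cellBlocks (a b j : ℕ) : Fin (j * a + 1) → Matrix (Fin (a * b)) (Fin (a * b)) ℝ :=
  fun e => if e = 0 then 0 else Ublk a b (((e : ℕ) - 1) / j)

section CellBlocks

variable {a b j : ℕ}

lemma cellBlocks_index_lt {e : Fin (j * a + 1)} (he : e ≠ 0) : ((e : ℕ) - 1) / j < a := by
  have h0 : (e : ℕ) ≠ 0 := Fin.val_ne_zero_iff.mpr he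
  exact Nat.div_lt_of_lt_mul (by have := e.isLt; omega)

lemma sum_cellBlocks : ∑ e, cellBlocks a b j e = (j : ℝ) • onesMat (a * b) := by
  rw [Fin.sum_univ_succ]
  simp only [cellBlocks, if_pos, Fin.succ_ne_zero, if_false, Fin.val_succ, Nat.add_sub_cancel,
    zero_add]
  rw [Fin.sum_univ_eq_sum_range (fun x => Ublk a b (x / j)), Finset.sum_range_mul_div, sum_Ublk,
    Nat.cast_smul_eq_nsmul]

lemma cellBlocks_mul_cellBlocks {e : Fin (j * a + 1)} (he : e ≠ 0) (f : Fin (j * a + 1)) :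
    cellBlocks a b j e * cellBlocks a b j f = (b : ℝ) • cellBlocks a b j f := by
  simp only [cellBlocks, if_neg he]
  split_ifs
  · simp
  · exact Ublk_mul_Ublk (cellBlocks_index_lt he) _

lemma cellBlocks_conv_cellBlocks :
    (fun d => ∑ e, cellBlocks a b j e * cellBlocks a b j (d - e))
      = (b : ℝ) • ((j : ℝ) • (fun _ => onesMat (a * b)) - cellBlocks a b j) := by
  funext d
  have hzero : cellBlocks a b j 0 * cellBlocks a b j (d - 0) = 0 := by simp [cellBlocks]
  have hshift : ∑ e, cellBlocks a b j (d - e) = ∑ e, cellBlocks a b j e :=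
    (Equiv.subLeft d).sum_comp _
  calc ∑ e, cellBlocks a b j e * cellBlocks a b j (d - e)
      = ∑ e ∈ Finset.univ.erase 0, (b : ℝ) • cellBlocks a b j (d - e) := by
        rw [← Finset.sum_erase
          (f := fun e => cellBlocks a b j e * cellBlocks a b j (d - e)) _ hzero]
        exact Finset.sum_congr rfl fun e he =>
          cellBlocks_mul_cellBlocks (Finset.ne_of_mem_erase he) _
    _ = (b : ℝ) • ((j : ℝ) • onesMat (a * b) - cellBlocks a b j d) := by
        rw [← Finset.smul_sum, Finset.sum_erase_eq_sub (Finset.mem_univ _), sub_zero, hshift,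
          sum_cellBlocks]

lemma mul_cellBlocks {A : Matrix (Fin (a * b)) (Fin (a * b)) ℝ} {k : ℝ}
    (hA : A * onesMat (a * b) = k • onesMat (a * b)) :
    (fun e => A * cellBlocks a b j e) = k • cellBlocks a b j := by
  funext e
  by_cases he : e = 0 <;> simp [cellBlocks, he, mul_Ublk hA]

lemma cellBlocks_mul {A : Matrix (Fin (a * b)) (Fin (a * b)) ℝ} {c μ : ℝ}
    (hU : ∀ i < a, Ublk a b i * A = c • Ublk a b i + μ • (onesMat (a * b) - Ublk a b i)) :
    (fun e => cellBlocks a b j e * A) = c • cellBlocks a b j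
      + μ • ((fun _ => onesMat (a * b)) - Pi.single 0 (onesMat (a * b)) - cellBlocks a b j) := by
  funext e
  by_cases he : e = 0
  · simp [cellBlocks, he]
  · simp [cellBlocks, he, hU _ (cellBlocks_index_lt he)]

lemma Mjoin_eq_blockCirculant (A : Matrix (Fin (a * b)) (Fin (a * b)) ℝ) :
    Mjoin a b j A = blockCirculant (Pi.single 0 A + cellBlocks a b j) := by
  ext p q
  by_cases h : q.1 - p.1 = 0 <;> simp [Mjoin, blockCirculant, cellBlocks, h]

lemma Mjoin_apply_self {A : Matrix (Fin (a * b)) (Fin (a * b)) ℝ} (hdiag : ∀ i, A i i = 0)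
    (p : Fin (j * a + 1) × Fin (a * b)) : Mjoin a b j A p p = 0 := by
  simp [Mjoin, hdiag]

lemma Mjoin_apply_eq_zero_or_one {A : Matrix (Fin (a * b)) (Fin (a * b)) ℝ}
    (h01 : ∀ i i', A i i' = 0 ∨ A i i' = 1) (p q : Fin (j * a + 1) × Fin (a * b)) :
    Mjoin a b j A p q = 0 ∨ Mjoin a b j A p q = 1 := by
  simp only [Mjoin, Ublk, of_apply]
  split_ifs
  exacts [h01 _ _, Or.inr rfl, Or.inl rfl]

end CellBlocks

section PiJoin

variable {a b j : ℕ} {A : Matrix (Fin (a * b)) (Fin (a * b)) ℝ}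

lemma sum_pijoinBlocks :
    ∑ e, (Pi.single 0 A + cellBlocks a b j : Fin (j * a + 1) → _) e
      = A + (j : ℝ) • onesMat (a * b) := by
  simp only [Pi.add_apply, Finset.sum_add_distrib, Finset.sum_pi_single', Finset.mem_univ,
    if_true, sum_cellBlocks]

lemma Mjoin_mul_Jbig {k : ℝ} (hAJ : A * onesMat (a * b) = k • onesMat (a * b)) :
    Mjoin a b j A * Jbig (j * a + 1) (a * b)
      = ((j : ℝ) * (a * b) + k) • Jbig (j * a + 1) (a * b) := by
  rw [Mjoin_eq_blockCirculant, ← blockCirculant_onesMat, blockCirculant_mul_const,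
    sum_pijoinBlocks, add_mul, hAJ, smul_mul_assoc, onesMat_mul_onesMat, ← blockCirculant_smul]
  congr 1
  funext _
  rw [Pi.smul_apply]
  push_cast
  module

lemma Jbig_mul_Mjoin {k : ℝ} (hJA : onesMat (a * b) * A = k • onesMat (a * b)) :
    Jbig (j * a + 1) (a * b) * Mjoin a b j A
      = ((j : ℝ) * (a * b) + k) • Jbig (j * a + 1) (a * b) := by
  rw [Mjoin_eq_blockCirculant, ← blockCirculant_onesMat, blockCirculant_const_mul,
    sum_pijoinBlocks, mul_add, hJA, mul_smul_comm, onesMat_mul_onesMat, ← blockCirculant_smul]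
  congr 1
  funext _
  rw [Pi.smul_apply]
  push_cast
  module

lemma Mjoin_mul_self {k t l m : ℝ} (hAJ : A * onesMat (a * b) = k • onesMat (a * b))
    (hA2 : A * A = t • 1 + l • A + m • (onesMat (a * b) - 1 - A))
    (hquot : ∀ i < a, Ublk a b i * A
      = (l + b - k) • Ublk a b i + m • (onesMat (a * b) - Ublk a b i)) :
    Mjoin a b j A * Mjoin a b j A
      = ((j : ℝ) * b + t) • 1 + ((j : ℝ) * b + l) • Mjoin a b j A
        + ((j : ℝ) * b + m) • (Jbig (j * a + 1) (a * b) - 1 - Mjoin a b j A) := by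
  set D := fun X : Matrix (Fin (a * b)) (Fin (a * b)) ℝ =>
    blockCirculant (Pi.single (0 : Fin (j * a + 1)) X)
  set P := blockCirculant (cellBlocks a b j)
  have hDD : D A * D A = t • 1 + l • D A + m • (D (onesMat (a * b)) - 1 - D A) := by
    simp only [D, blockCirculant_single_mul_single, hA2, Pi.single_add, Pi.single_smul,
      Pi.single_sub, blockCirculant_add, blockCirculant_sub, blockCirculant_smul,
      blockCirculant_single_one]
  have hDP : D A * P = k • P := by
    rw [blockCirculant_single_mul, mul_cellBlocks hAJ, blockCirculant_smul]
  have hPD : P * D A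
      = (l + b - k) • P + m • (Jbig (j * a + 1) (a * b) - D (onesMat (a * b)) - P) := by
    rw [blockCirculant_mul_single, cellBlocks_mul hquot, blockCirculant_add, blockCirculant_smul,
      blockCirculant_smul, blockCirculant_sub, blockCirculant_sub, blockCirculant_onesMat]
  have hPP : P * P = (b : ℝ) • ((j : ℝ) • Jbig (j * a + 1) (a * b) - P) := by
    rw [blockCirculant_mul, cellBlocks_conv_cellBlocks, blockCirculant_smul, blockCirculant_sub,
      blockCirculant_smul, blockCirculant_onesMat]
  rw [Mjoin_eq_blockCirculant, blockCirculant_add, add_mul, mul_add, mul_add, hDD, hDP, hPD, hPP]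
  module

end PiJoin

theorem pijoin_is_dsrg_general (a b j k t l m : ℕ)
    (A : Matrix (Fin (a * b)) (Fin (a * b)) ℝ)
    (h01 : ∀ i j', A i j' = 0 ∨ A i j' = 1)
    (hdiag : ∀ i, A i i = 0)
    (hAJ : A * onesMat (a * b) = (k : ℝ) • onesMat (a * b))
    (hJA : onesMat (a * b) * A = (k : ℝ) • onesMat (a * b))
    (hA2 : A * A = (t : ℝ) • (1 : Matrix (Fin (a * b)) (Fin (a * b)) ℝ) + (l : ℝ) • A
            + (m : ℝ) • (onesMat (a * b) - 1 - A))
    (hquot : ∀ i : ℕ, i < a →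
      Ublk a b i * A = ((l : ℝ) + (b : ℝ) - (k : ℝ)) • Ublk a b i
        + (m : ℝ) • (onesMat (a * b) - Ublk a b i)) :
    Fintype.card (Fin (j * a + 1) × Fin (a * b)) = (j * a + 1) * (a * b) ∧
    (∀ p q, Mjoin a b j A p q = 0 ∨ Mjoin a b j A p q = 1) ∧
    (∀ p, Mjoin a b j A p p = 0) ∧
    Mjoin a b j A * Jbig (j * a + 1) (a * b)
      = ((j * (a * b) + k : ℕ) : ℝ) • Jbig (j * a + 1) (a * b) ∧
    Jbig (j * a + 1) (a * b) * Mjoin a b j A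
      = ((j * (a * b) + k : ℕ) : ℝ) • Jbig (j * a + 1) (a * b) ∧
    Mjoin a b j A * Mjoin a b j A
      = ((j * b + t : ℕ) : ℝ) • (1 : Matrix (Fin (j * a + 1) × Fin (a * b))
            (Fin (j * a + 1) × Fin (a * b)) ℝ)
        + ((j * b + l : ℕ) : ℝ) • Mjoin a b j A
        + ((j * b + m : ℕ) : ℝ) • (Jbig (j * a + 1) (a * b) - 1 - Mjoin a b j A) := by
  push_cast
  exact ⟨by simp, Mjoin_apply_eq_zero_or_one h01, Mjoin_apply_self hdiag, Mjoin_mul_Jbig hAJ,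
    Jbig_mul_Mjoin hJA, Mjoin_mul_self hAJ hA2 hquot⟩

/-- Main sufficiency theorem: if `A` is the adjacency matrix of a DSRG with
parameters `(ab,k,t,λ,μ)` respecting a homogeneous partition into `a` cells of
size `b`, whose quotient condition `Uᵢ·A = (λ+b−k)Uᵢ + μ(J−Uᵢ)` holds, then for
every positive integer `j` the π-join `M_j(A)` is the adjacency matrix of a
DSRG with parameters `((ja+1)n, jn+k, jb+t, jb+λ, jb+μ)`. -/
theorem pijoin_is_dsrg (a b j k t l m : ℕ) (ha : 0 < a) (hb : 0 < b) (hj : 0 < j)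
    (A : Matrix (Fin (a * b)) (Fin (a * b)) ℝ)
    (h01 : ∀ i j', A i j' = 0 ∨ A i j' = 1)
    (hdiag : ∀ i, A i i = 0)
    (hAJ : A * onesMat (a * b) = (k : ℝ) • onesMat (a * b))
    (hJA : onesMat (a * b) * A = (k : ℝ) • onesMat (a * b))
    (hA2 : A * A = (t : ℝ) • (1 : Matrix (Fin (a * b)) (Fin (a * b)) ℝ) + (l : ℝ) • A
            + (m : ℝ) • (onesMat (a * b) - 1 - A))
    (hquot : ∀ i : ℕ, i < a →
      Ublk a b i * A = ((l : ℝ) + (b : ℝ) - (k : ℝ)) • Ublk a b i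
        + (m : ℝ) • (onesMat (a * b) - Ublk a b i)) :
    Fintype.card (Fin (j * a + 1) × Fin (a * b)) = (j * a + 1) * (a * b) ∧
    (∀ p q, Mjoin a b j A p q = 0 ∨ Mjoin a b j A p q = 1) ∧
    (∀ p, Mjoin a b j A p p = 0) ∧
    Mjoin a b j A * Jbig (j * a + 1) (a * b)
      = ((j * (a * b) + k : ℕ) : ℝ) • Jbig (j * a + 1) (a * b) ∧
    Jbig (j * a + 1) (a * b) * Mjoin a b j A
      = ((j * (a * b) + k : ℕ) : ℝ) • Jbig (j * a + 1) (a * b) ∧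
    Mjoin a b j A * Mjoin a b j A
      = ((j * b + t : ℕ) : ℝ) • (1 : Matrix (Fin (j * a + 1) × Fin (a * b))
            (Fin (j * a + 1) × Fin (a * b)) ℝ)
        + ((j * b + l : ℕ) : ℝ) • Mjoin a b j A
        + ((j * b + m : ℕ) : ℝ) • (Jbig (j * a + 1) (a * b) - 1 - Mjoin a b j A) :=
  pijoin_is_dsrg_general a b j k t l m A h01 hdiag hAJ hJA hA2 hquot
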